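/- arXiv:1102.1622 — 7 statements merged into one kernel-verified Lean document; each statement's English description precedes it below -/
import Mathlib

section
/- Let k ≥ 2 and r ≥ 2 be integers, and let z_1, …, z_k be nonzero complex numbers with Re(z_i) ≥ 0 for all i and with z_1^r + ⋯ + z_k^r = 0. Then max_{i=1,…,k} Arg(z_i) − min_{i=1,…,k} Arg(z_i) ≥ π/r. -/
/-!
If all arguments of the `z i` lie in an interval `[a, b]` with `r (b - a) < π`, then all `z i ^ r`
have arguments in `[r a, r b]`, so after rotating by `-r (a + b) / 2` they lie in the open right
half-plane, and a nonempty sum of such numbers has positive real part, hence is nonzero.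
-/

open Complex Finset

theorem Complex.re_pow_mul_exp_neg_mul_I (z : ℂ) (n : ℕ) (θ : ℝ) :
    (z ^ n * exp (-θ * I)).re = ‖z‖ ^ n * Real.cos (n * arg z - θ) := by
  have hpolar : z ^ n * exp (-θ * I) = ((‖z‖ ^ n : ℝ) : ℂ) * exp ((n * arg z - θ : ℝ) * I) := by
    conv_lhs => rw [← norm_mul_exp_arg_mul_I z]
    rw [mul_pow, ← exp_nat_mul, mul_assoc, ← exp_add]
    push_cast
    ring_nf
  rw [hpolar, re_ofReal_mul, exp_ofReal_mul_I_re]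

theorem Finset.sum_ne_zero_of_forall_re_pos {ι : Type*} {s : Finset ι} (hs : s.Nonempty)
    {w : ι → ℂ} (hw : ∀ i ∈ s, 0 < (w i).re) : ∑ i ∈ s, w i ≠ 0 := by
  intro h
  have := congrArg re h
  rw [re_sum, zero_re] at this
  exact (sum_pos hw hs).ne' this

theorem Complex.sum_pow_ne_zero_of_arg_mem_Icc {ι : Type*} {s : Finset ι} (hs : s.Nonempty)
    {z : ι → ℂ} (hz : ∀ i ∈ s, z i ≠ 0) {a b : ℝ} (harg : ∀ i ∈ s, arg (z i) ∈ Set.Icc a b)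
    {n : ℕ} (hn : n * (b - a) < Real.pi) : ∑ i ∈ s, z i ^ n ≠ 0 := by
  set θ : ℝ := n * (a + b) / 2 with hθ
  suffices ∑ i ∈ s, z i ^ n * exp (-θ * I) ≠ 0 by
    rwa [← sum_mul, mul_ne_zero_iff_right (exp_ne_zero _)] at this
  refine sum_ne_zero_of_forall_re_pos hs fun i hi => ?_
  obtain ⟨hai, hib⟩ := harg i hi
  have hna : (n : ℝ) * a ≤ n * arg (z i) := by gcongr
  have hnb : (n : ℝ) * arg (z i) ≤ n * b := by gcongr
  rw [re_pow_mul_exp_neg_mul_I]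
  have hcos : 0 < Real.cos (n * arg (z i) - θ) := by
    rw [mul_sub] at hn
    exact Real.cos_pos_of_mem_Ioo ⟨by linarith, by linarith⟩
  have hnorm : 0 < ‖z i‖ := norm_pos_iff.mpr (hz i hi)
  positivity

theorem stmt_1 (k r : ℕ) (hk : 2 ≤ k)
    (z : Fin k → ℂ) (hz0 : ∀ i, z i ≠ 0)
    (hsum : ∑ i, (z i) ^ r = 0) :
    Real.pi / r ≤
      Finset.univ.sup' ⟨⟨0, by omega⟩, Finset.mem_univ _⟩ (fun i => (z i).arg)
        - Finset.univ.inf' ⟨⟨0, by omega⟩, Finset.mem_univ _⟩ (fun i => (z i).arg) := by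
  have hne : (univ : Finset (Fin k)).Nonempty := ⟨⟨0, by omega⟩, mem_univ _⟩
  set M := univ.sup' hne fun i => (z i).arg
  set m := univ.inf' hne fun i => (z i).arg
  have hm (i : Fin k) : m ≤ (z i).arg := inf'_le (fun i => (z i).arg) (mem_univ i)
  have hM (i : Fin k) : (z i).arg ≤ M := le_sup' (fun i => (z i).arg) (mem_univ i)
  have hspread : Real.pi ≤ r * (M - m) := by
    by_contra! h
    exact sum_pow_ne_zero_of_arg_mem_Icc hne (fun i _ => hz0 i) (fun i _ => ⟨hm i, hM i⟩) h hsum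
  have hmM : 0 ≤ M - m := sub_nonneg.mpr ((hm ⟨0, by omega⟩).trans (hM _))
  exact div_le_of_le_mul₀ (Nat.cast_nonneg r) hmM (by linarith)
end

section
/- Let α_1, …, α_m and β_1, …, β_n be nonzero complex numbers with Re(α_i) ≥ 0 and Re(β_j) ≥ 0 for all i, j, and suppose that Re(α_i · β_j) ≥ 0 for all pairs (i, j). Then max_{i,j} Arg(α_i β_j) − min_{i,j} Arg(α_i β_j) ≥ (max_i Arg(α_i) − min_i Arg(α_i)) + (max_j Arg(β_j) − min_j Arg(β_j)). -/
open Complex Real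

theorem stmt_5 (m n : ℕ) (hm : 0 < m) (hn : 0 < n)
    (α : Fin m → ℂ) (β : Fin n → ℂ)
    (hα0 : ∀ i, α i ≠ 0) (hβ0 : ∀ j, β j ≠ 0)
    (hα : ∀ i, 0 ≤ (α i).re) (hβ : ∀ j, 0 ≤ (β j).re)
    (hαβ : ∀ i j, 0 ≤ (α i * β j).re) :
    (Finset.univ.sup' ⟨⟨0, hm⟩, Finset.mem_univ _⟩ (fun i => (α i).arg)
        - Finset.univ.inf' ⟨⟨0, hm⟩, Finset.mem_univ _⟩ (fun i => (α i).arg))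
      + (Finset.univ.sup' ⟨⟨0, hn⟩, Finset.mem_univ _⟩ (fun j => (β j).arg)
        - Finset.univ.inf' ⟨⟨0, hn⟩, Finset.mem_univ _⟩ (fun j => (β j).arg))
      ≤ Finset.univ.sup' ⟨(⟨0, hm⟩, ⟨0, hn⟩), Finset.mem_univ _⟩
          (fun p : Fin m × Fin n => (α p.1 * β p.2).arg)
        - Finset.univ.inf' ⟨(⟨0, hm⟩, ⟨0, hn⟩), Finset.mem_univ _⟩
          (fun p : Fin m × Fin n => (α p.1 * β p.2).arg) := by
  have key : ∀ i j, (α i * β j).arg = (α i).arg + (β j).arg := by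
    intro i j
    have ha : |(α i).arg| ≤ π / 2 := Complex.abs_arg_le_pi_div_two_iff.2 (hα i)
    have hb : |(β j).arg| ≤ π / 2 := Complex.abs_arg_le_pi_div_two_iff.2 (hβ j)
    rw [abs_le] at ha hb
    apply Complex.arg_mul (hα0 i) (hβ0 j)
    constructor
    · rcases lt_or_eq_of_le (by linarith : -π ≤ (α i).arg + (β j).arg) with h | h
      · exact h
      · exfalso
        have ha' : (α i).arg = -(π/2) := by linarith
        have hb' : (β j).arg = -(π/2) := by linarith
        rw [Complex.arg_eq_neg_pi_div_two_iff] at ha' hb'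
        have := hαβ i j
        rw [Complex.mul_re, ha'.1, hb'.1] at this
        nlinarith [ha'.2, hb'.2]
    · linarith
  obtain ⟨i0, _, hi0⟩ := Finset.exists_mem_eq_sup' ⟨⟨0, hm⟩, Finset.mem_univ _⟩ (fun i => (α i).arg)
  obtain ⟨j0, _, hj0⟩ := Finset.exists_mem_eq_sup' ⟨⟨0, hn⟩, Finset.mem_univ _⟩ (fun j => (β j).arg)
  obtain ⟨i1, _, hi1⟩ := Finset.exists_mem_eq_inf' ⟨⟨0, hm⟩, Finset.mem_univ _⟩ (fun i => (α i).arg)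
  obtain ⟨j1, _, hj1⟩ := Finset.exists_mem_eq_inf' ⟨⟨0, hn⟩, Finset.mem_univ _⟩ (fun j => (β j).arg)
  have h1 : (α i0 * β j0).arg ≤ Finset.univ.sup' ⟨(⟨0, hm⟩, ⟨0, hn⟩), Finset.mem_univ _⟩
      (fun p : Fin m × Fin n => (α p.1 * β p.2).arg) :=
    Finset.le_sup' (fun p : Fin m × Fin n => (α p.1 * β p.2).arg) (Finset.mem_univ (i0, j0))
  have h2 : Finset.univ.inf' ⟨(⟨0, hm⟩, ⟨0, hn⟩), Finset.mem_univ _⟩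
      (fun p : Fin m × Fin n => (α p.1 * β p.2).arg) ≤ (α i1 * β j1).arg :=
    Finset.inf'_le (fun p : Fin m × Fin n => (α p.1 * β p.2).arg) (Finset.mem_univ (i1, j1))
  rw [key] at h1 h2
  rw [hi0, hj0, hi1, hj1]
  linarith
end

section
/- Let p ≥ 3 be an integer. For each q = 1, …, p let m_q ≥ 1 and let α_{q,1}, …, α_{q,m_q} be nonzero complex numbers satisfying ∑_{i=1}^{m_q} α_{q,i} = 1 and ∑_{i=1}^{m_q} α_{q,i}^{q+1} = 0. Then there exist indices i_1 ∈ {1,…,m_1}, …, i_p ∈ {1,…,m_p} such that Re(∏_{q=1}^{p} α_{q,i_q}) < 0. -/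
/-!
Suppose every product `P J = ∏ q, α q (J q)` lies in the closed right half-plane and fix one,
`P I`, with positive real part. Arguments in `[-π/2, π/2]` never wrap around, so
`arg P J = arg P I + ∑ q, (arg P (I[q ↦ J q]) - arg P I)`. At level `q` the numbers
`P (I[q ↦ i])` are a common multiple of the `α q i`, so their `(q+2)`-th powers sum to zero,
and two of them have arguments at least `π/(q+2)` apart. Taking the extremal choice at every level
gives two products whose arguments differ by at least `π/2 + π/3 + π/4 > π`.
-/

open Complex Finset Function
open scoped Real

lemma re_pow_mul_exp_pos {z : ℂ} (hz : z ≠ 0) {n : ℕ} {c : ℝ} (h : |n * arg z - c| < π / 2) :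
    0 < (z ^ n * exp (-c * I)).re := by
  have hpolar : z ^ n * exp (-c * I) = ((‖z‖ ^ n : ℝ) : ℂ) * exp ((n * arg z - c : ℝ) * I) := by
    conv_lhs => rw [← norm_mul_exp_arg_mul_I z]
    rw [mul_pow, ← exp_nat_mul, mul_assoc, ← exp_add]
    push_cast
    ring_nf
  rw [hpolar, re_ofReal_mul, exp_ofReal_mul_I_re]
  exact mul_pos (pow_pos (norm_pos_iff.2 hz) n) (Real.cos_pos_of_mem_Ioo (abs_lt.1 h))

theorem exists_pi_div_le_arg_sub_arg {ι : Type*} [Fintype ι] [Nonempty ι] {z : ι → ℂ}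
    (hz : ∀ i, z i ≠ 0) {n : ℕ} (hn : 0 < n) (hsum : ∑ i, z i ^ n = 0) :
    ∃ i j, π / n ≤ arg (z i) - arg (z j) := by
  by_contra! hspread
  -- then all `z i ^ n` lie in a sector of angle `< π`, which one rotation moves into the open
  -- right half-plane, where they cannot sum to zero
  obtain ⟨i₀, hi₀⟩ := Finite.exists_max fun i ↦ arg (z i)
  obtain ⟨j₀, hj₀⟩ := Finite.exists_min fun i ↦ arg (z i)
  set c : ℝ := n * ((arg (z i₀) + arg (z j₀)) / 2) with hc
  have hn' : (0 : ℝ) < n := by exact_mod_cast hn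
  have hwidth : n * (arg (z i₀) - arg (z j₀)) < π := by
    have := hspread i₀ j₀
    rwa [lt_div_iff₀ hn', mul_comm] at this
  have hpos : ∀ k, 0 < (z k ^ n * exp (-c * I)).re := fun k ↦ by
    refine re_pow_mul_exp_pos (hz k) (abs_lt.2 ⟨?_, ?_⟩)
    · linarith [mul_le_mul_of_nonneg_left (hj₀ k) hn'.le]
    · linarith [mul_le_mul_of_nonneg_left (hi₀ k) hn'.le]
  have hzero : ∑ k, (z k ^ n * exp (-c * I)).re = 0 := by
    rw [← re_sum, ← sum_mul, hsum, zero_mul, zero_re]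
  exact (sum_pos (fun k _ ↦ hpos k) univ_nonempty).ne' hzero

lemma arg_add_arg_eq_of_mul_eq {a b c d : ℂ} (ha : a ≠ 0) (hb : b ≠ 0) (hc : c ≠ 0)
    (hd : d ≠ 0) (h : a * b = c * d) (hlt : |arg a + arg b - (arg c + arg d)| < 2 * π) :
    arg a + arg b = arg c + arg d := by
  have hangle : ((arg a + arg b : ℝ) : Real.Angle) = (arg c + arg d : ℝ) := by
    rw [Real.Angle.coe_add, Real.Angle.coe_add, ← arg_mul_coe_angle ha hb,
      ← arg_mul_coe_angle hc hd, h]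
  obtain ⟨k, hk⟩ := Real.Angle.angle_eq_iff_two_pi_dvd_sub.1 hangle
  have hk0 : k = 0 := by
    rw [hk, abs_mul, abs_of_pos (by positivity : 0 < 2 * π)] at hlt
    have : |(k : ℝ)| < 1 := by nlinarith [Real.pi_pos]
    exact Int.abs_lt_one_iff.1 (by exact_mod_cast this)
  rw [hk0, Int.cast_zero, mul_zero, sub_eq_zero] at hk
  exact hk

section Grid

variable {κ : Type*} [Fintype κ] [DecidableEq κ] {ι : κ → Type*} (α : ∀ q, ι q → ℂ)

lemma prod_apply_update_eq_mul_prod_erase (J : ∀ q, ι q) (q : κ) (i : ι q) :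
    ∏ r, α r (update J q i r) = α q i * ∏ r ∈ univ.erase q, α r (J r) := by
  rw [← mul_prod_erase _ _ (mem_univ q), update_self]
  congr 1
  exact prod_congr rfl fun r hr ↦ by rw [update_of_ne (ne_of_mem_erase hr)]

lemma prod_update_mul_prod_eq_prod_mul_prod_update {J I : ∀ q, ι q} {q : κ} (h : J q = I q)
    (i : ι q) :
    (∏ r, α r (update J q i r)) * ∏ r, α r (I r) =
      (∏ r, α r (J r)) * ∏ r, α r (update I q i r) := by
  rw [prod_apply_update_eq_mul_prod_erase, prod_apply_update_eq_mul_prod_erase,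
    ← mul_prod_erase univ (fun r ↦ α r (I r)) (mem_univ q),
    ← mul_prod_erase univ (fun r ↦ α r (J r)) (mem_univ q), h]
  ring

variable {α} (hα : ∀ q i, α q i ≠ 0) (hre : ∀ J : ∀ q, ι q, 0 ≤ (∏ q, α q (J q)).re)
  {I : ∀ q, ι q} (hI : 0 < (∏ q, α q (I q)).re)
include hα hre hI

lemma arg_prod_update {J : ∀ q, ι q} {q : κ} (hJ : J q = I q) (i : ι q) :
    arg (∏ r, α r (update J q i r)) =
      arg (∏ r, α r (J r)) + (arg (∏ r, α r (update I q i r)) - arg (∏ r, α r (I r))) := by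
  have hP : ∀ K : ∀ q, ι q, ∏ r, α r (K r) ≠ 0 := fun K ↦ prod_ne_zero_iff.2 fun r _ ↦ hα r _
  have harg : ∀ K : ∀ q, ι q, |arg (∏ r, α r (K r))| ≤ π / 2 :=
    fun K ↦ abs_arg_le_pi_div_two_iff.2 (hre K)
  have hargI := abs_arg_lt_pi_div_two_iff.2 (Or.inl hI)
  obtain ⟨h₁, h₁'⟩ := abs_le.1 (harg (update J q i))
  obtain ⟨h₂, h₂'⟩ := abs_lt.1 hargI
  obtain ⟨h₃, h₃'⟩ := abs_le.1 (harg J)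
  obtain ⟨h₄, h₄'⟩ := abs_le.1 (harg (update I q i))
  -- the strict bound on `arg P I` keeps the defect below `2π`
  have := arg_add_arg_eq_of_mul_eq (hP _) (hP _) (hP _) (hP _)
    (prod_update_mul_prod_eq_prod_mul_prod_update α hJ i) (abs_lt.2 ⟨by linarith, by linarith⟩)
  linarith

lemma arg_prod_piecewise (S : Finset κ) (J : ∀ q, ι q) :
    arg (∏ q, α q (S.piecewise J I q)) = arg (∏ q, α q (I q)) +
      ∑ q ∈ S, (arg (∏ r, α r (update I q (J q) r)) - arg (∏ r, α r (I r))) := by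
  induction S using Finset.induction_on with
  | empty => simp
  | insert a S ha ih =>
    rw [piecewise_insert, arg_prod_update hα hre hI (piecewise_eq_of_notMem _ _ _ ha), ih,
      sum_insert ha]
    ring

lemma sum_arg_prod_update_sub_le_pi (J K : ∀ q, ι q) :
    ∑ q, (arg (∏ r, α r (update I q (J q) r)) - arg (∏ r, α r (update I q (K q) r))) ≤ π := by
  have hJ := arg_prod_piecewise hα hre hI univ J
  have hK := arg_prod_piecewise hα hre hI univ K
  rw [piecewise_univ] at hJ hK
  rw [sum_sub_distrib] at hJ hK ⊢
  linarith [abs_le.1 (abs_arg_le_pi_div_two_iff.2 (hre J)),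
    abs_le.1 (abs_arg_le_pi_div_two_iff.2 (hre K))]

end Grid

lemma pi_lt_sum_pi_div_add_two {p : ℕ} (hp : 3 ≤ p) :
    π < ∑ q : Fin p, π / ((q.val + 2 : ℕ) : ℝ) := by
  rw [Fin.sum_univ_eq_sum_range (fun k ↦ π / ((k + 2 : ℕ) : ℝ))]
  calc π < ∑ k ∈ range 3, π / ((k + 2 : ℕ) : ℝ) := by
        norm_num [sum_range_succ]
        linarith [Real.pi_pos]
    _ ≤ _ := sum_le_sum_of_subset_of_nonneg (range_subset_range.2 hp)
        fun _ _ _ ↦ by positivity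

theorem stmt_6_general (p : ℕ) (hp : 3 ≤ p) (m : Fin p → ℕ)
    (α : (q : Fin p) → Fin (m q) → ℂ)
    (hα0 : ∀ q i, α q i ≠ 0)
    (hcons : ∀ q, ∑ i, α q i = 1)
    (horder : ∀ q : Fin p, ∑ i, (α q i) ^ (q.val + 2) = 0) :
    ∃ i : (q : Fin p) → Fin (m q), (∏ q, α q (i q)).re < 0 := by
  by_contra! hre
  have hsum : ∑ J : ∀ q, Fin (m q), (∏ q, α q (J q)).re = 1 := by
    simp [← re_sum, ← Fintype.prod_sum, hcons]
  obtain ⟨I, -, hI⟩ : ∃ I ∈ (univ : Finset (∀ q, Fin (m q))), (0 : ℝ) < (∏ q, α q (I q)).re :=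
    exists_lt_of_sum_lt (by simp [hsum])
  have hspread : ∀ q, ∃ i j, π / ((q.val + 2 : ℕ) : ℝ) ≤
      arg (∏ r, α r (update I q i r)) - arg (∏ r, α r (update I q j r)) := fun q ↦ by
    have : Nonempty (Fin (m q)) := ⟨I q⟩
    refine exists_pi_div_le_arg_sub_arg
      (fun i ↦ prod_ne_zero_iff.2 fun r _ ↦ hα0 r _) (by omega) ?_
    simp only [prod_apply_update_eq_mul_prod_erase, mul_pow, ← sum_mul, horder, zero_mul]
  choose a b hab using hspread
  linarith [pi_lt_sum_pi_div_add_two hp, sum_le_sum fun q (_ : q ∈ univ) ↦ hab q,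
    sum_arg_prod_update_sub_le_pi hα0 hre hI a b]

theorem stmt_6 (p : ℕ) (hp : 3 ≤ p) (m : Fin p → ℕ) (hm : ∀ q, 1 ≤ m q)
    (α : (q : Fin p) → Fin (m q) → ℂ)
    (hα0 : ∀ q i, α q i ≠ 0)
    (hcons : ∀ q, ∑ i, α q i = 1)
    (horder : ∀ q : Fin p, ∑ i, (α q i) ^ (q.val + 2) = 0) :
    ∃ i : (q : Fin p) → Fin (m q), (∏ q, α q (i q)).re < 0 :=
  stmt_6_general p hp m α hα0 hcons horder
end

section
/- Let p ≥ 7 be an integer. For each q = 1, …, p let m_q ≥ 1 and let α_{q,1}, …, α_{q,m_q} be nonzero complex numbers satisfying the palindromic symmetry α_{q, m_q + 1 − i} = α_{q,i} for all i, the consistency condition ∑_{i=1}^{m_q} α_{q,i} = 1, and the order-raising condition ∑_{i=1}^{m_q} α_{q,i}^{2q+1} = 0. Then there exist indices i_1 ∈ {1,…,m_1}, …, i_p ∈ {1,…,m_p} such that Re(∏_{q=1}^{p} α_{q,i_q}) < 0. -/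
/-!
At a level whose `n`-th power sum vanishes (`n ≥ 2`), two coefficients have a ratio of argument at
least `π / n`: otherwise, after a rotation, all coefficients lie in a sector `0 ≤ arg < π / n`,
so their `n`-th powers lie in the half-open upper half-plane and cannot cancel.

Suppose every product of coefficients lies in the closed right half-plane. Choose such a pair
`u q`, `l q` at every level and switch the levels from `l q` to `u q` one at a time. As long as
the ratio is not a negative real, each switch adds its argument to the argument of the product,
since the product cannot jump across the left half-plane. The argument of the product therefore
grows by at least `∑ q < p, π / (2q+3)`, which for `p ≥ 7` exceeds `π` because
`1/3 + 1/5 + ⋯ + 1/15 > 1`; yet it stays in `[-π/2, π/2]`.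
-/

open Complex Finset Real

namespace Complex

lemma arg_eq_of_coe_angle_eq {z : ℂ} {θ : ℝ} (h : (arg z : Real.Angle) = θ)
    (hθ : θ ∈ Set.Ioc (-π) π) : arg z = θ := by
  rwa [arg_coe_angle_eq_iff_eq_toReal, Real.Angle.toReal_coe_eq_self_iff_mem_Ioc.mpr hθ] at h

lemma arg_div_eq_sub {x y : ℂ} (hx : x ≠ 0) (hy : y ≠ 0)
    (h : arg x - arg y ∈ Set.Ioc (-π) π) : arg (x / y) = arg x - arg y :=
  arg_eq_of_coe_angle_eq (by rw [arg_div_coe_angle hx hy, Real.Angle.coe_sub]) h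

lemma arg_pow_eq_mul {z : ℂ} (n : ℕ) (h : n * arg z ∈ Set.Ioc (-π) π) :
    arg (z ^ n) = n * arg z :=
  arg_eq_of_coe_angle_eq (by rw [arg_pow_coe_angle, ← Real.Angle.coe_nsmul, nsmul_eq_mul]) h

lemma arg_mul_eq_add_of_re_nonneg {z w : ℂ} (hz : z ≠ 0) (hw : w ≠ 0) (hzre : 0 ≤ z.re)
    (hzwre : 0 ≤ (z * w).re) (hw₀ : 0 ≤ arg w) (hwπ : arg w < π) :
    arg (z * w) = arg z + arg w := by
  have hz' := abs_le.mp (abs_arg_le_pi_div_two_iff.mpr hzre)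
  have hzw' := abs_le.mp (abs_arg_le_pi_div_two_iff.mpr hzwre)
  rcases le_or_gt (arg z + arg w) π with h | h
  · exact arg_mul hz hw ⟨by linarith, h⟩
  · have : arg (z * w) = arg z + arg w - 2 * π :=
      arg_eq_of_coe_angle_eq (by simp [arg_mul_coe_angle hz hw]) ⟨by linarith, by linarith⟩
    linarith

lemma sum_ne_zero_of_arg_mem_Ico {κ : Type*} [Fintype κ] [Nonempty κ] {v : κ → ℂ}
    (hv : ∀ i, v i ≠ 0) (harg : ∀ i, arg (v i) ∈ Set.Ico 0 π) : ∑ i, v i ≠ 0 := by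
  intro hsum
  have him : ∀ i, (v i).im = 0 := by
    have h := congrArg im hsum
    rw [im_sum, zero_im] at h
    exact fun i => (sum_eq_zero_iff_of_nonneg fun i _ => arg_nonneg_iff.mp (harg i).1).mp h i
      (mem_univ i)
  have hre : ∀ i, 0 < (v i).re := fun i => by
    have h0 : 0 ≤ (v i).re := ((arg_lt_pi_iff.mp (harg i).2).resolve_right (not_not.mpr (him i)))
    exact h0.lt_of_ne fun h => hv i (Complex.ext h.symm (him i))
  have := congrArg re hsum
  rw [re_sum, zero_re] at this
  exact (sum_pos (fun i _ => hre i) univ_nonempty).ne' this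

lemma exists_pi_div_le_arg_div_of_sum_pow_eq_zero {κ : Type*} [Fintype κ] [Nonempty κ]
    {n : ℕ} (hn : 2 ≤ n) {z : κ → ℂ} (hz : ∀ i, z i ≠ 0) (hsum : ∑ i, z i ^ n = 0) :
    ∃ i j, π / n ≤ arg (z i / z j) := by
  by_contra! h
  have hn' : (2 : ℝ) ≤ n := by exact_mod_cast hn
  have hπn : π / n ≤ π / 2 := div_le_div_of_nonneg_left pi_pos.le two_pos hn'
  obtain i₀ : κ := Classical.arbitrary κ
  set θ : κ → ℝ := fun i => arg (z i / z i₀)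
  have hθ : ∀ i, -(π / n) < θ i ∧ θ i < π / n := fun i => by
    refine ⟨?_, h i i₀⟩
    have := h i₀ i
    rw [← inv_div, arg_inv, if_neg (by linarith [h i i₀, pi_pos])] at this
    linarith
  obtain ⟨j₀, -, hj₀⟩ := exists_min_image univ θ univ_nonempty
  set v : κ → ℂ := fun i => z i / z j₀
  have hv : ∀ i, v i ≠ 0 := fun i => div_ne_zero (hz i) (hz j₀)
  have hargv : ∀ i, 0 ≤ arg (v i) ∧ arg (v i) < π / n := fun i => by
    have hdiv : v i = (z i / z i₀) / (z j₀ / z i₀) := (div_div_div_cancel_right₀ (hz i₀) _ _).symm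
    have := hθ i; have := hθ j₀; have := hj₀ i (mem_univ i)
    have hsub : arg (v i) = θ i - θ j₀ := by
      rw [hdiv, arg_div_eq_sub (div_ne_zero (hz i) (hz i₀)) (div_ne_zero (hz j₀) (hz i₀))
        ⟨by linarith, by linarith⟩]
    exact ⟨by linarith, h i j₀⟩
  refine sum_ne_zero_of_arg_mem_Ico (v := fun i => v i ^ n) (fun i => pow_ne_zero n (hv i))
    (fun i => ?_) ?_
  · have hlt : n * arg (v i) < π := (lt_div_iff₀' (by linarith)).mp (hargv i).2
    have h0 : 0 ≤ n * arg (v i) := mul_nonneg (by positivity) (hargv i).1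
    rw [arg_pow_eq_mul n ⟨by linarith [pi_pos], hlt.le⟩]
    exact ⟨h0, hlt⟩
  · simp only [v, div_pow, ← sum_div, hsum, zero_div]

lemma im_eq_zero_of_re_mul_eq_zero {κ : Type*} [Fintype κ] {a : κ → ℂ} {w : ℂ} (hw : w ≠ 0)
    (hsum : ∑ k, a k = 1) (h : ∀ k, (w * a k).re = 0) (k : κ) : (a k).im = 0 := by
  have hwre : w.re = 0 := by
    have : (w * ∑ k, a k).re = 0 := by
      rw [mul_sum, re_sum]
      exact sum_eq_zero fun k _ => h k
    rwa [hsum, mul_one] at this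
  have hwim : w.im ≠ 0 := fun h0 => hw (Complex.ext hwre h0)
  have := h k
  rw [mul_re, hwre, zero_mul, zero_sub, neg_eq_zero] at this
  exact (mul_eq_zero.mp this).resolve_left hwim

end Complex

section Products

variable {ι : Type*} [Fintype ι] {κ : ι → Type*}

lemma im_prod_eq_zero {α : (q : ι) → κ q → ℂ} (hreal : ∀ q k, (α q k).im = 0)
    (c : (q : ι) → κ q) : (∏ q, α q (c q)).im = 0 := by
  rw [prod_congr rfl fun q _ => (Complex.ext rfl (by simp [hreal]) : α q (c q) = (α q (c q)).re),
    ← ofReal_prod, ofReal_im]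

variable [DecidableEq ι]

lemma prod_apply_update_eq_mul_prod_erase_s7 {M : Type*} [CommMonoid M] (f : (q : ι) → κ q → M)
    (c : (q : ι) → κ q) (q₀ : ι) (k : κ q₀) :
    ∏ q, f q (Function.update c q₀ k q) = f q₀ k * ∏ q ∈ univ.erase q₀, f q (c q) := by
  rw [← mul_prod_erase _ _ (mem_univ q₀), Function.update_self]
  exact congrArg _ (prod_congr rfl fun q hq => by rw [Function.update_of_ne (ne_of_mem_erase hq)])

variable {α : (q : ι) → κ q → ℂ} (hα0 : ∀ q k, α q k ≠ 0)
  (hnonneg : ∀ c : (q : ι) → κ q, 0 ≤ (∏ q, α q (c q)).re)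
include hα0 hnonneg

lemma re_prod_eq_zero_of_arg_div_eq_pi {q₀ : ι} {i j : κ q₀} (h : arg (α q₀ i / α q₀ j) = π)
    (c : (q : ι) → κ q) (hc : c q₀ = j) : (∏ q, α q (c q)).re = 0 := by
  obtain ⟨hneg, him⟩ := arg_eq_pi_iff.mp h
  have hreal : ((α q₀ i / α q₀ j).re : ℂ) = α q₀ i / α q₀ j := Complex.ext rfl (by simp [him])
  have hc' : Function.update c q₀ j = c := by rw [← hc, Function.update_eq_self]
  have hratio : ∏ q, α q (Function.update c q₀ i q)
      = ((α q₀ i / α q₀ j).re : ℂ) * ∏ q, α q (c q) := by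
    rw [prod_apply_update_eq_mul_prod_erase_s7, ← hc', prod_apply_update_eq_mul_prod_erase_s7, hc',
      hreal, ← mul_assoc, div_mul_cancel₀ _ (hα0 q₀ j)]
  have h₁ := hnonneg (Function.update c q₀ i)
  rw [hratio, re_ofReal_mul] at h₁
  exact le_antisymm (nonpos_of_mul_nonneg_right h₁ hneg) (hnonneg c)

lemma im_eq_zero_of_arg_div_eq_pi [∀ q, Fintype (κ q)] [∀ q, Nonempty (κ q)]
    (hsum : ∀ q, ∑ k, α q k = 1) {q₀ : ι} {i j : κ q₀} (h : arg (α q₀ i / α q₀ j) = π)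
    {q : ι} (hq : q ≠ q₀) (k : κ q) : (α q k).im = 0 := by
  set c : (q : ι) → κ q := Function.update (fun q => Classical.arbitrary (κ q)) q₀ j
  set w := ∏ q' ∈ univ.erase q, α q' (c q')
  have hw : w ≠ 0 := prod_ne_zero_iff.mpr fun q' _ => hα0 q' (c q')
  refine im_eq_zero_of_re_mul_eq_zero hw (hsum q) (fun k' => ?_) k
  have := re_prod_eq_zero_of_arg_div_eq_pi hα0 hnonneg h (Function.update c q k')
    (by simp [c, hq.symm])
  rwa [prod_apply_update_eq_mul_prod_erase_s7, mul_comm] at this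

/- A negative real ratio at one level puts the products through it on the imaginary axis, which
makes every other level real; a second level, being real, then has a negative ratio too, so all
levels are real and the products through that second ratio are real and purely imaginary. -/
lemma arg_div_ne_pi [Nontrivial ι] [∀ q, Fintype (κ q)] [∀ q, Nonempty (κ q)]
    (hsum : ∀ q, ∑ k, α q k = 1) {n : ι → ℕ} (hn : ∀ q, 2 ≤ n q)
    (hpow : ∀ q, ∑ k, α q k ^ n q = 0) (q₀ : ι) (i j : κ q₀) : arg (α q₀ i / α q₀ j) ≠ π := by
  intro h
  obtain ⟨q₁, hq₁⟩ := exists_ne q₀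
  have hreal₁ := im_eq_zero_of_arg_div_eq_pi hα0 hnonneg hsum h hq₁
  obtain ⟨i₁, j₁, hij₁⟩ := exists_pi_div_le_arg_div_of_sum_pow_eq_zero (hn q₁) (hα0 q₁) (hpow q₁)
  have h₁ : arg (α q₁ i₁ / α q₁ j₁) = π := by
    have him : (α q₁ i₁ / α q₁ j₁).im = 0 := by simp [div_im, hreal₁]
    refine arg_eq_pi_iff.mpr ⟨not_le.mp fun hre => ?_, him⟩
    have : 0 < π / n q₁ := div_pos pi_pos (Nat.cast_pos.mpr (by linarith [hn q₁]))
    linarith [arg_eq_zero_iff.mpr ⟨hre, him⟩]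
  have hreal : ∀ q k, (α q k).im = 0 := fun q => by
    by_cases hq : q = q₁
    · subst hq; exact hreal₁
    · exact im_eq_zero_of_arg_div_eq_pi hα0 hnonneg hsum h₁ hq
  set c : (q : ι) → κ q := Function.update (fun q => Classical.arbitrary (κ q)) q₁ j₁
  have hre := re_prod_eq_zero_of_arg_div_eq_pi hα0 hnonneg h₁ c (Function.update_self ..)
  exact prod_ne_zero_iff.mpr (fun q _ => hα0 q (c q)) (Complex.ext hre (im_prod_eq_zero hreal c))

lemma sum_arg_div_le_pi (u l : (q : ι) → κ q)
    (harg : ∀ q, arg (α q (u q) / α q (l q)) ∈ Set.Ico 0 π) :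
    ∑ q, arg (α q (u q) / α q (l q)) ≤ π := by
  set c : Finset ι → (q : ι) → κ q := fun S q => if q ∈ S then u q else l q
  have hP : ∀ S, ∏ q, α q (c S q) ≠ 0 := fun S => prod_ne_zero_iff.mpr fun q _ => hα0 q _
  have hstep : ∀ a S, a ∉ S →
      ∏ q, α q (c (insert a S) q) = (∏ q, α q (c S q)) * (α a (u a) / α a (l a)) := by
    intro a S ha
    have hins : c (insert a S) = Function.update (c S) a (u a) := by
      ext q
      by_cases hq : q = a
      · subst hq; simp [c]
      · simp [c, hq]
    have hS : Function.update (c S) a (l a) = c S := by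
      rw [← Function.update_eq_self a (c S)]
      simp [c, ha]
    rw [hins, prod_apply_update_eq_mul_prod_erase_s7, ← hS, prod_apply_update_eq_mul_prod_erase_s7, hS]
    field_simp [hα0 a (l a)]
  have hwalk : ∀ S, arg (∏ q, α q (c S q)) = arg (∏ q, α q (c ∅ q))
      + ∑ q ∈ S, arg (α q (u q) / α q (l q)) := by
    intro S
    induction S using Finset.induction_on with
    | empty => simp
    | insert a S ha ih =>
      rw [sum_insert ha, hstep a S ha, arg_mul_eq_add_of_re_nonneg (hP S)
        (div_ne_zero (hα0 _ _) (hα0 _ _)) (hnonneg _) (hstep a S ha ▸ hnonneg _) (harg a).1 (harg a).2,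
        ih]
      ring
  have h₀ := abs_le.mp (abs_arg_le_pi_div_two_iff.mpr (hnonneg (c ∅)))
  have h₁ := abs_le.mp (abs_arg_le_pi_div_two_iff.mpr (hnonneg (c univ)))
  linarith [hwalk univ]

end Products

lemma pi_lt_sum_pi_div_odd {p : ℕ} (hp : 7 ≤ p) :
    π < ∑ q : Fin p, π / ((2 * q.val + 3 : ℕ) : ℝ) := by
  rw [Fin.sum_univ_eq_sum_range (fun s => π / ((2 * s + 3 : ℕ) : ℝ)) p]
  calc π < ∑ s ∈ range 7, π / ((2 * s + 3 : ℕ) : ℝ) := by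
        simp only [sum_range_succ, sum_range_zero]
        norm_num
        linarith [pi_pos]
    _ ≤ _ := sum_le_sum_of_subset_of_nonneg (range_subset_range.mpr hp)
        fun _ _ _ => by positivity

theorem stmt_7_general (p : ℕ) (hp : 7 ≤ p) (m : Fin p → ℕ) (hm : ∀ q, 1 ≤ m q)
    (α : (q : Fin p) → Fin (m q) → ℂ)
    (hα0 : ∀ q i, α q i ≠ 0)
    (hcons : ∀ q, ∑ i, α q i = 1)
    (horder : ∀ q : Fin p, ∑ i, (α q i) ^ (2 * q.val + 3) = 0) :
    ∃ i : (q : Fin p) → Fin (m q), (∏ q, α q (i q)).re < 0 := by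
  by_contra! hnonneg
  have : ∀ q, Nonempty (Fin (m q)) := fun q => ⟨⟨0, hm q⟩⟩
  have : Nontrivial (Fin p) := Fin.nontrivial_iff_two_le.mpr (by omega)
  have hn : ∀ q : Fin p, 2 ≤ 2 * q.val + 3 := fun q => by omega
  choose u l hul using fun q =>
    exists_pi_div_le_arg_div_of_sum_pow_eq_zero (hn q) (hα0 q) (horder q)
  have hlt : ∀ q, arg (α q (u q) / α q (l q)) < π := fun q =>
    (arg_le_pi _).lt_of_ne (arg_div_ne_pi hα0 hnonneg hcons hn horder q _ _)
  have hle := sum_arg_div_le_pi hα0 hnonneg u l fun q =>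
    ⟨(by positivity : (0 : ℝ) ≤ _).trans (hul q), hlt q⟩
  linarith [sum_le_sum fun q (_ : q ∈ univ) => hul q, pi_lt_sum_pi_div_odd hp]

theorem stmt_7 (p : ℕ) (hp : 7 ≤ p) (m : Fin p → ℕ) (hm : ∀ q, 1 ≤ m q)
    (α : (q : Fin p) → Fin (m q) → ℂ)
    (hα0 : ∀ q i, α q i ≠ 0)
    (hsym : ∀ q (i : Fin (m q)), α q i.rev = α q i)
    (hcons : ∀ q, ∑ i, α q i = 1)
    (horder : ∀ q : Fin p, ∑ i, (α q i) ^ (2 * q.val + 3) = 0) :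
    ∃ i : (q : Fin p) → Fin (m q), (∏ q, α q (i q)).re < 0 :=
  stmt_7_general p hp m hm α hα0 hcons horder
end

section
/- Let p ≥ 1 be an integer, set θ = π/(2p+1), and define α = (1/4)·(1 + i·sin(θ)/(1 + cos(θ))). Then α + conj(α) = 1/2 and α^{2p+1} + (conj(α))^{2p+1} = 0. -/
theorem stmt_11 (p : ℕ) (hp : 1 ≤ p)
    (α : ℂ)
    (hα : α = (1 / 4 : ℂ) * (1 + Complex.I *
      ((Real.sin (Real.pi / (2 * p + 1)) / (1 + Real.cos (Real.pi / (2 * p + 1)))) : ℝ))) :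
    α + (starRingEnd ℂ) α = 1 / 2 ∧
      α ^ (2 * p + 1) + ((starRingEnd ℂ) α) ^ (2 * p + 1) = 0 := by
  have hπ := Real.pi_pos
  have hden : (0:ℝ) < 2 * (p:ℝ) + 1 := by positivity
  set θ : ℝ := Real.pi / (2 * (p:ℝ) + 1) with hθdef
  set t : ℝ := θ / 2 with htdef
  have hθ0 : 0 < θ := by positivity
  have hθπ : θ < Real.pi := by
    rw [hθdef]
    apply div_lt_self hπ
    have : (1:ℝ) ≤ (p:ℝ) := by exact_mod_cast hp
    linarith
  have ht0 : 0 < t := by rw [htdef]; linarith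
  have htlt : t < Real.pi / 2 := by rw [htdef]; linarith
  have hcos : 0 < Real.cos t := Real.cos_pos_of_mem_Ioo ⟨by linarith, htlt⟩
  have h2t : θ = 2 * t := by rw [htdef]; ring
  have hratio : Real.sin θ / (1 + Real.cos θ) = Real.sin t / Real.cos t := by
    rw [h2t, Real.sin_two_mul, Real.cos_two_mul]
    rw [show 1 + (2 * Real.cos t ^ 2 - 1) = 2 * Real.cos t ^ 2 by ring]
    field_simp
  have hcosC : (Real.cos t : ℂ) ≠ 0 := by exact_mod_cast hcos.ne'
  have hCcos : Complex.cos (t:ℂ) ≠ 0 := by rw [← Complex.ofReal_cos]; exact hcosC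
  have hα' : α = ((1/(4*Real.cos t) : ℝ) : ℂ) * Complex.exp (t * Complex.I) := by
    rw [hα, hratio, Complex.exp_mul_I, Complex.ofReal_div, Complex.ofReal_div,
      Complex.ofReal_mul, Complex.ofReal_one, Complex.ofReal_ofNat,
      Complex.ofReal_sin, Complex.ofReal_cos]
    field_simp [hCcos]
  have hnt : ((2*p+1 : ℕ):ℝ) * t = Real.pi/2 := by
    push_cast
    rw [htdef, hθdef]
    field_simp
  have hpow : α ^ (2*p+1) = (((1/(4*Real.cos t))^(2*p+1) : ℝ) : ℂ) * Complex.I := by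
    rw [hα', mul_pow, ← Complex.exp_nat_mul]
    have harg : ((2*p+1 : ℕ):ℂ) * ((t:ℂ) * Complex.I) = ((Real.pi/2 : ℝ):ℂ) * Complex.I := by
      rw [← mul_assoc]
      congr 1
      push_cast [← hnt]
      ring
    rw [harg, Complex.exp_mul_I, ← Complex.ofReal_cos, ← Complex.ofReal_sin,
      Real.cos_pi_div_two, Real.sin_pi_div_two]
    push_cast
    ring
  constructor
  · rw [hα]
    simp only [map_mul, map_add, map_one, Complex.conj_I, map_div₀, map_ofNat, map_one,
      Complex.conj_ofReal]
    ring
  · have hconj : ((starRingEnd ℂ) α) ^ (2*p+1) = (starRingEnd ℂ) (α ^ (2*p+1)) := by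
      rw [map_pow]
    rw [hconj, hpow]
    simp only [map_mul, Complex.conj_ofReal, Complex.conj_I]
    ring
end

section
/- Let p ≥ 1 be an integer, set θ = π/(2p+1), and define α = (1/4)·(1 + i·sin(θ)/(1 + cos(θ))). Then Arg(α) − Arg(conj(α)) = π/(2p+1); consequently, the pair (z_1, z_2) = (α, conj(α)) consists of nonzero complex numbers with nonnegative real parts satisfying z_1^{2p+1} + z_2^{2p+1} = 0, for which max(Arg z_1, Arg z_2) − min(Arg z_1, Arg z_2) equals exactly π/(2p+1). -/
/-!
Since `sin θ / (1 + cos θ) = tan (θ / 2)`, the number `α` is `r e^{iθ/2}` with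
`r = 1 / (4 cos (θ / 2)) > 0`, so `arg α = θ / 2` and `arg (conj α) = -θ / 2`.
Moreover `(2p + 1) · θ / 2 = π / 2`, so `α ^ (2p + 1) = r ^ (2p + 1) · i` is purely imaginary
and cancels against its conjugate `(conj α) ^ (2p + 1)`.
-/

open Complex ComplexConjugate

lemma Real.sin_div_one_add_cos_eq_tan_half {x : ℝ} (hx : Real.cos (x / 2) ≠ 0) :
    Real.sin x / (1 + Real.cos x) = Real.tan (x / 2) := by
  conv_lhs => rw [show x = 2 * (x / 2) by ring]
  rw [Real.sin_two_mul, Real.cos_two_mul, Real.tan_eq_sin_div_cos]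
  field_simp
  ring

namespace Complex

lemma one_add_I_mul_tan {t : ℝ} (ht : Real.cos t ≠ 0) :
    1 + I * (Real.tan t : ℂ) = ((Real.cos t)⁻¹ : ℝ) * exp (t * I) := by
  have ht' : cos (t : ℂ) ≠ 0 := by rw [← ofReal_cos]; exact_mod_cast ht
  rw [exp_mul_I, Real.tan_eq_sin_div_cos]
  push_cast
  field_simp

lemma arg_real_mul_exp_mul_I {r t : ℝ} (hr : 0 < r) (ht : t ∈ Set.Ioc (-Real.pi) Real.pi) :
    arg (r * exp (t * I)) = t := by
  rw [exp_mul_I]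
  exact arg_mul_cos_add_sin_mul_I hr ht

lemma pow_add_conj_pow_eq_zero {z : ℂ} {n : ℕ} (h : n * arg z = Real.pi / 2) :
    z ^ n + conj z ^ n = 0 := by
  have hpow : z ^ n = ((‖z‖ ^ n : ℝ) : ℂ) * I := by
    have h' : (n : ℂ) * (arg z * I) = Real.pi / 2 * I := by
      rw [← mul_assoc]
      exact_mod_cast congrArg (fun x : ℝ => (x : ℂ) * I) h
    conv_lhs => rw [← norm_mul_exp_arg_mul_I z]
    rw [mul_pow, ← exp_nat_mul, h', exp_pi_div_two_mul_I, ofReal_pow]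
  rw [← map_pow, hpow, map_mul, conj_ofReal, conj_I]
  ring

end Complex

theorem stmt_12 (p : ℕ) (hp : 1 ≤ p)
    (α : ℂ)
    (hα : α = (1 / 4 : ℂ) * (1 + Complex.I *
      ((Real.sin (Real.pi / (2 * p + 1)) / (1 + Real.cos (Real.pi / (2 * p + 1)))) : ℝ))) :
    α.arg - ((starRingEnd ℂ) α).arg = Real.pi / (2 * p + 1) ∧
    α ≠ 0 ∧ (starRingEnd ℂ) α ≠ 0 ∧
    0 ≤ α.re ∧ 0 ≤ ((starRingEnd ℂ) α).re ∧
    α ^ (2 * p + 1) + ((starRingEnd ℂ) α) ^ (2 * p + 1) = 0 ∧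
    max α.arg ((starRingEnd ℂ) α).arg - min α.arg ((starRingEnd ℂ) α).arg
      = Real.pi / (2 * p + 1) := by
  set t := Real.pi / (2 * p + 1) / 2 with ht
  have hp' : (1 : ℝ) ≤ p := mod_cast hp
  have ht_pos : 0 < t := by positivity
  have ht_lt : t < Real.pi / 2 := by
    rw [ht, div_lt_div_iff_of_pos_right two_pos]
    exact div_lt_self Real.pi_pos (by linarith)
  have hcos : 0 < Real.cos t := Real.cos_pos_of_mem_Ioo ⟨by linarith, ht_lt⟩
  have hα_polar : α = ((4 * Real.cos t)⁻¹ : ℝ) * exp (t * I) := by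
    rw [hα, Real.sin_div_one_add_cos_eq_tan_half hcos.ne', one_add_I_mul_tan hcos.ne']
    push_cast
    ring
  have harg : α.arg = t := by
    rw [hα_polar]
    exact arg_real_mul_exp_mul_I (by positivity) ⟨by linarith, by linarith⟩
  have harg_conj : (conj α).arg = -t := by
    rw [arg_conj, harg, if_neg (by linarith)]
  have hre : α.re = 1 / 4 := by simp [hα, -ofReal_div, -ofReal_sin, -ofReal_cos]
  have hne : α ≠ 0 := fun h => by norm_num [h] at hre
  refine ⟨by rw [harg, harg_conj]; ring, hne, (map_ne_zero _).2 hne, by rw [hre]; norm_num,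
    by rw [conj_re, hre]; norm_num, pow_add_conj_pow_eq_zero ?_, ?_⟩
  · rw [harg, ht]; push_cast; field_simp
  · rw [harg, harg_conj, max_eq_left (by linarith), min_eq_right (by linarith)]
    ring
end

section
/- Let p ≥ 1 and let c be a complex number with Re(c) < 0. For each q = 1, …, p let β_{q,1}, …, β_{q,m_q} be complex numbers with ∑_{i=1}^{m_q} β_{q,i} = 1. Then there exist indices i_1 ∈ {1,…,m_1}, …, i_p ∈ {1,…,m_p} such that Re(c · ∏_{q=1}^{p} β_{q,i_q}) < 0. -/
theorem stmt_13 (p : ℕ) (hp : 1 ≤ p) (c : ℂ) (hc : c.re < 0)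
    (m : Fin p → ℕ) (β : (q : Fin p) → Fin (m q) → ℂ)
    (hcons : ∀ q, ∑ i, β q i = 1) :
    ∃ i : (q : Fin p) → Fin (m q), (c * ∏ q, β q (i q)).re < 0 := by
  by_contra h
  push_neg at h
  have hsum : ∑ x : (q : Fin p) → Fin (m q), c * ∏ q, β q (x q) = c := by
    rw [← Finset.mul_sum, ← Fintype.prod_sum]
    simp [hcons]
  have : (0:ℝ) ≤ (∑ x : (q : Fin p) → Fin (m q), c * ∏ q, β q (x q)).re := by
    rw [Complex.re_sum]
    exact Finset.sum_nonneg fun x _ => h x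
  rw [hsum] at this
  linarith
end
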